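/- Under the setting of the line-search least-squares method, with w = (I - yy*)z ≠ 0 a least-squares solution and s = y + τw the line-search minimizer, the minimal value satisfies ‖(A - θI)Vs‖²/‖s‖² = ((τ - 1)/τ) · ‖(A - θI)Vw‖²/‖w‖². -/

import Mathlib

open Matrix
open scoped ComplexConjugate

/-- Squared Euclidean norm of a complex vector. -/
noncomputable def nsq {k : ℕ} (x : Fin k → ℂ) : ℝ := ∑ i, ‖x i‖ ^ 2

/-- Standard Hermitian inner product (conjugate-linear in the first argument). -/
noncomputable def cip {k : ℕ} (x y : Fin k → ℂ) : ℂ := ∑ i, conj (x i) * y i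

/-- Orthogonal projection `(I - yy*) v`. -/
noncomputable def proj {k : ℕ} (y v : Fin k → ℂ) : Fin k → ℂ := v - cip y v • y

/-!
Since `y` is a unit vector orthogonal to `w`, along the line `t ↦ y + t w` the Rayleigh quotient
is `N(t) / D(t)` with `N(t) = ‖By‖² - 2δt + δt²` and `D(t) = 1 + ωt²`, where `B = (A - θI)V`,
`δ = ‖Bw‖²` and `ω = ‖w‖²`; the cross term `-δ` comes from pairing the normal equations with `w`.
At the minimiser `τ` the derivative vanishes, `N'(τ) D(τ) = N(τ) D'(τ)`, which reads
`N(τ) τω = (τ - 1) δ D(τ)`.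
-/

section InnerProduct

variable {k : ℕ}

lemma cip_self (x : Fin k → ℂ) : cip x x = nsq x := by
  simp [cip, nsq, Complex.conj_mul', Complex.ofReal_sum]

lemma cip_sub_right (x y z : Fin k → ℂ) : cip x (y - z) = cip x y - cip x z := by
  simp [cip, mul_sub, Finset.sum_sub_distrib]

lemma cip_smul_right (c : ℂ) (x y : Fin k → ℂ) : cip x (c • y) = c * cip x y := by
  simp only [cip, Pi.smul_apply, smul_eq_mul, Finset.mul_sum]
  exact Finset.sum_congr rfl fun i _ => by ring

lemma cip_neg_right (x y : Fin k → ℂ) : cip x (-y) = -cip x y := by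
  simp [cip]

lemma conj_cip (x y : Fin k → ℂ) : conj (cip x y) = cip y x := by
  simp [cip, map_sum, mul_comm]

lemma cip_conjTranspose_mul_self_mulVec {n : ℕ} (B : Matrix (Fin n) (Fin k) ℂ)
    (x y : Fin k → ℂ) : cip x ((Bᴴ * B) *ᵥ y) = cip (B *ᵥ x) (B *ᵥ y) := by
  change star x ⬝ᵥ _ = star (B *ᵥ x) ⬝ᵥ _
  rw [← mulVec_mulVec, dotProduct_mulVec, ← star_mulVec]

lemma nsq_zero : nsq (0 : Fin k → ℂ) = 0 := by
  simp [nsq]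

lemma nsq_pos {x : Fin k → ℂ} (hx : x ≠ 0) : 0 < nsq x := by
  obtain ⟨i, hi⟩ := Function.ne_iff.mp hx
  exact (pow_pos (norm_pos_iff.mpr hi) 2).trans_le
    (Finset.single_le_sum (fun j _ => sq_nonneg ‖x j‖) (Finset.mem_univ i))

lemma nsq_add_real_smul (u v : Fin k → ℂ) (t : ℝ) :
    nsq (u + (t : ℂ) • v) = nsq u + 2 * t * (cip v u).re + t ^ 2 * nsq v := by
  simp only [nsq, cip, Pi.add_apply, Pi.smul_apply, smul_eq_mul, Complex.sq_norm,
    Complex.normSq_apply, Complex.re_sum, Finset.mul_sum, ← Finset.sum_add_distrib]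
  refine Finset.sum_congr rfl fun i _ => ?_
  simp only [Complex.add_re, Complex.add_im, Complex.mul_re, Complex.mul_im, Complex.ofReal_re,
    Complex.ofReal_im, Complex.conj_re, Complex.conj_im]
  ring

lemma cip_proj (y v : Fin k → ℂ) (hy : nsq y = 1) : cip y (proj y v) = 0 := by
  rw [proj, cip_sub_right, cip_smul_right, cip_self, hy]
  simp

lemma cip_proj_of_cip_eq_zero {x y : Fin k → ℂ} (hxy : cip x y = 0) (v : Fin k → ℂ) :
    cip x (proj y v) = cip x v := by
  rw [proj, cip_sub_right, cip_smul_right, hxy, mul_zero, sub_zero]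

end InnerProduct

lemma linear_coeff_eq_zero_of_forall_nonneg {a b : ℝ} (h : ∀ x : ℝ, 0 ≤ a * x ^ 2 + b * x) :
    b = 0 := by
  have hmin : IsLocalMin (fun x : ℝ => a * x ^ 2 + b * x) 0 :=
    Filter.Eventually.of_forall fun x => by simpa using h x
  have hderiv : HasDerivAt (fun x : ℝ => a * x ^ 2 + b * x) b 0 :=
    (((hasDerivAt_pow 2 0).const_mul a).add ((hasDerivAt_id 0).const_mul b)).congr_deriv
      (by simp)
  exact hmin.hasDerivAt_eq_zero hderiv

lemma quadratic_div_critical_of_forall_le {α β γ ω τ : ℝ} (hω : 0 ≤ ω)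
    (hmin : ∀ t : ℝ, (α + 2 * β * τ + γ * τ ^ 2) / (1 + ω * τ ^ 2)
      ≤ (α + 2 * β * t + γ * t ^ 2) / (1 + ω * t ^ 2)) :
    (α + 2 * β * τ + γ * τ ^ 2) * (ω * τ) = (β + γ * τ) * (1 + ω * τ ^ 2) := by
  have hden : ∀ t : ℝ, 0 < 1 + ω * t ^ 2 := fun t => by positivity
  -- `N(τ + x) D(τ) - N(τ) D(τ + x)` is a quadratic in `x` without constant term
  have hquad : ∀ x : ℝ, 0 ≤ (γ * (1 + ω * τ ^ 2) - ω * (α + 2 * β * τ + γ * τ ^ 2)) * x ^ 2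
      + 2 * ((β + γ * τ) * (1 + ω * τ ^ 2) - (α + 2 * β * τ + γ * τ ^ 2) * (ω * τ)) * x := by
    intro x
    have h := (div_le_div_iff₀ (hden τ) (hden (τ + x))).mp (hmin (τ + x))
    linear_combination h
  linear_combination -(linear_coeff_eq_zero_of_forall_nonneg hquad) / 2

theorem stmt7_general {n k : ℕ} (A : Matrix (Fin n) (Fin n) ℂ) (V : Matrix (Fin n) (Fin k) ℂ)
    (θ : ℂ) (y z : Fin k → ℂ)
    (hy : nsq y = 1)
    (M : Matrix (Fin k) (Fin k) ℂ)
    (hM : M = Vᴴ * (A - θ • 1)ᴴ * ((A - θ • 1) * V))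
    (w : Fin k → ℂ) (hw : w = proj y z)
    (hne : proj y (M.mulVec w) = -(proj y (M.mulVec y)))
    (τ : ℝ) (s : Fin k → ℂ) (hs : s = y + (τ : ℂ) • w)
    (hmin : ∀ a b : ℂ, a • y + b • w ≠ 0 →
      nsq ((A - θ • 1).mulVec (V.mulVec s)) / nsq s
        ≤ nsq ((A - θ • 1).mulVec (V.mulVec (a • y + b • w))) / nsq (a • y + b • w))
    (hw0 : w ≠ 0) (hτ0 : τ ≠ 0) :
    nsq ((A - θ • 1).mulVec (V.mulVec s)) / nsq s
      = ((τ - 1) / τ) * (nsq ((A - θ • 1).mulVec (V.mulVec w)) / nsq w) := by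
  simp only [mulVec_mulVec] at hmin ⊢
  set B := (A - θ • 1) * V
  have hMB : M = Bᴴ * B := by rw [hM, conjTranspose_mul, Matrix.mul_assoc]
  have hyw : cip y w = 0 := hw ▸ cip_proj y z hy
  have hwy : cip w y = 0 := by rw [← conj_cip, hyw, map_zero]
  -- the normal equations paired with `w`
  have hcross : cip (B *ᵥ w) (B *ᵥ y) = -nsq (B *ᵥ w) := by
    have h := congrArg (cip w) hne
    rw [cip_proj_of_cip_eq_zero hwy, cip_neg_right, cip_proj_of_cip_eq_zero hwy, hMB,
      cip_conjTranspose_mul_self_mulVec, cip_conjTranspose_mul_self_mulVec, cip_self] at h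
    linear_combination h
  have hω : 0 < nsq w := nsq_pos hw0
  have hden : ∀ t : ℝ, nsq (y + (t : ℂ) • w) = 1 + nsq w * t ^ 2 := fun t => by
    rw [nsq_add_real_smul, hwy, hy, Complex.zero_re]
    ring
  have hquot : ∀ t : ℝ, nsq (B *ᵥ (y + (t : ℂ) • w)) / nsq (y + (t : ℂ) • w)
      = (nsq (B *ᵥ y) + 2 * -nsq (B *ᵥ w) * t + nsq (B *ᵥ w) * t ^ 2)
        / (1 + nsq w * t ^ 2) := fun t => by
    rw [hden, mulVec_add, mulVec_smul, nsq_add_real_smul, hcross, Complex.neg_re,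
      Complex.ofReal_re]
    ring
  have hline_ne : ∀ t : ℝ, (1 : ℂ) • y + (t : ℂ) • w ≠ 0 := fun t h => by
    have := hden t
    rw [one_smul] at h
    rw [h, nsq_zero] at this
    nlinarith [sq_nonneg t]
  have hstat := quadratic_div_critical_of_forall_le hω.le (τ := τ) fun t => by
    simpa only [one_smul, hs, hquot] using hmin 1 t (hline_ne t)
  have hD : 0 < 1 + nsq w * τ ^ 2 := by positivity
  rw [hs, hquot]
  field_simp
  linear_combination hstat

theorem stmt7 {n k : ℕ} (A : Matrix (Fin n) (Fin n) ℂ) (V : Matrix (Fin n) (Fin k) ℂ)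
    (θ : ℂ) (y z : Fin k → ℂ)
    (hV : Vᴴ * V = 1) (hy : nsq y = 1)
    (hRitz : (Vᴴ * ((A - θ • 1) * V)).mulVec y = 0)
    (M : Matrix (Fin k) (Fin k) ℂ)
    (hM : M = Vᴴ * (A - θ • 1)ᴴ * ((A - θ • 1) * V))
    (w : Fin k → ℂ) (hw : w = proj y z)
    (hne : proj y (M.mulVec w) = -(proj y (M.mulVec y)))
    (τ : ℝ) (s : Fin k → ℂ) (hs : s = y + (τ : ℂ) • w)
    (hmin : ∀ a b : ℂ, a • y + b • w ≠ 0 →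
      nsq ((A - θ • 1).mulVec (V.mulVec s)) / nsq s
        ≤ nsq ((A - θ • 1).mulVec (V.mulVec (a • y + b • w))) / nsq (a • y + b • w))
    (hw0 : w ≠ 0) (hτ0 : τ ≠ 0) :
    nsq ((A - θ • 1).mulVec (V.mulVec s)) / nsq s
      = ((τ - 1) / τ) * (nsq ((A - θ • 1).mulVec (V.mulVec w)) / nsq w) :=
  stmt7_general A V θ y z hy M hM w hw hne τ s hs hmin hw0 hτ0
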